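/- arXiv:1907.09530 — 9 statements merged into one kernel-verified Lean document; each statement's English description precedes it below -/
import Mathlib

section
/- Let P, Q, R, S be real numbers with R > 0 and S > 0. If the limit as w → ∞ of P·cos(Sw)·sin(Rw) + Q·cos(Rw)·sin(Sw) exists and equals 0, then either P = Q = 0, or R = S and P + Q = 0. -/
open Real Filter

lemma aux_cos_coeff (a c φ : ℝ) (hc : 0 < c)
    (h : Tendsto (fun w : ℝ => a * Real.cos (c * w + φ)) atTop (nhds 0)) : a = 0 := by
  have hseq : Tendsto (fun n : ℕ => (2 * π * n - φ) / c) atTop atTop := by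
    apply Tendsto.atTop_div_const hc
    apply tendsto_atTop_add_const_right
    exact Tendsto.const_mul_atTop (by positivity) tendsto_natCast_atTop_atTop
  have h2 : Tendsto (fun n : ℕ => a * Real.cos (c * ((2 * π * n - φ) / c) + φ)) atTop (nhds 0) :=
    h.comp hseq
  have h3 : (fun n : ℕ => a * Real.cos (c * ((2 * π * n - φ) / c) + φ)) = fun _ : ℕ => a := by
    funext n
    have harg : c * ((2 * π * n - φ) / c) + φ = (n : ℝ) * (2 * π) := by
      field_simp; ring
    rw [harg, Real.cos_nat_mul_two_pi, mul_one]
  rw [h3] at h2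
  exact tendsto_nhds_unique tendsto_const_nhds h2

lemma aux_sin_coeff (a c : ℝ) (hc : 0 < c)
    (h : Tendsto (fun w : ℝ => a * Real.sin (c * w)) atTop (nhds 0)) : a = 0 := by
  apply aux_cos_coeff a c (-(π/2)) hc
  have : (fun w : ℝ => a * Real.cos (c * w + -(π/2))) = fun w : ℝ => a * Real.sin (c * w) := by
    funext w
    rw [← sub_eq_add_neg, Real.cos_sub]
    simp
  rw [this]; exact h

theorem trig_limit_dichotomy (P Q R S : ℝ) (hR : R > 0) (hS : S > 0)
    (h : Tendsto (fun w : ℝ => P * Real.cos (S * w) * Real.sin (R * w)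
        + Q * Real.cos (R * w) * Real.sin (S * w)) atTop (nhds 0)) :
    (P = 0 ∧ Q = 0) ∨ (R = S ∧ P + Q = 0) := by
  set A := (P + Q) / 2 with hA
  set B := (P - Q) / 2 with hB
  set c := R + S with hc
  set d := R - S with hd
  have hcpos : 0 < c := by positivity
  have hfe : (fun w : ℝ => P * Real.cos (S * w) * Real.sin (R * w)
        + Q * Real.cos (R * w) * Real.sin (S * w))
      = fun w : ℝ => A * Real.sin (c * w) + B * Real.sin (d * w) := by
    funext w
    have h1 : c * w = R * w + S * w := by rw [hc]; ring
    have h2 : d * w = R * w - S * w := by rw [hd]; ring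
    rw [h1, h2, Real.sin_add, Real.sin_sub, hA, hB]
    ring
  rw [hfe] at h
  by_cases hdz : d = 0
  · right
    constructor
    · linarith [sub_eq_zero.mp hdz]
    · have h' : Tendsto (fun w : ℝ => A * Real.sin (c * w)) atTop (nhds 0) := by
        have : (fun w : ℝ => A * Real.sin (c * w) + B * Real.sin (d * w))
            = fun w : ℝ => A * Real.sin (c * w) := by
          funext w; rw [hdz]; simp
        rwa [this] at h
      have hA0 := aux_sin_coeff A c hcpos h'
      have : P + Q = 0 := by
        have := hA ▸ hA0
        linarith [this]
      exact this
  · left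
    -- shift trick: f(w + 2π/c) - f(w) → 0
    set p := 2 * π / c with hp
    have hshift : Tendsto (fun w : ℝ => A * Real.sin (c * (w + p)) + B * Real.sin (d * (w + p)))
        atTop (nhds 0) := h.comp (tendsto_atTop_add_const_right atTop p tendsto_id)
    have hdiff : Tendsto (fun w : ℝ =>
        (A * Real.sin (c * (w + p)) + B * Real.sin (d * (w + p)))
        - (A * Real.sin (c * w) + B * Real.sin (d * w))) atTop (nhds 0) := by
      simpa using hshift.sub h
    set θ := d * p with hθ
    have hident : (fun w : ℝ =>
        (A * Real.sin (c * (w + p)) + B * Real.sin (d * (w + p)))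
        - (A * Real.sin (c * w) + B * Real.sin (d * w)))
        = fun w : ℝ => (2 * B * Real.sin (θ / 2)) * Real.cos (d * w + θ / 2) := by
      funext w
      have hcp : c * (w + p) = c * w + 2 * π := by
        rw [hp]; field_simp
      have hdp : d * (w + p) = d * w + θ := by rw [hθ]; ring
      rw [hcp, hdp, Real.sin_add (c * w) (2 * π)]
      simp only [Real.sin_two_pi, Real.cos_two_pi, mul_zero, mul_one, zero_mul, add_zero]
      have : Real.sin (d * w + θ) - Real.sin (d * w)
          = 2 * Real.sin (θ / 2) * Real.cos (d * w + θ / 2) := by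
        rw [Real.sin_sub_sin]
        ring_nf
      linear_combination B * this
    rw [hident] at hdiff
    -- sin(θ/2) ≠ 0 since θ/2 = π d / c ∈ (-π, π) \ {0}
    have hθval : θ / 2 = π * d / c := by rw [hθ, hp]; field_simp
    have hsin_ne : Real.sin (θ / 2) ≠ 0 := by
      rw [hθval]
      have hdc1 : |d| < c := by
        rw [abs_lt]; constructor <;> [skip; skip] <;> rw [hd, hc] <;> nlinarith
      have hlt : |π * d / c| < π := by
        rw [abs_div, abs_mul, abs_of_pos Real.pi_pos, abs_of_pos hcpos, div_lt_iff₀ hcpos]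
        nlinarith [Real.pi_pos]
      have hne : π * d / c ≠ 0 := by
        apply div_ne_zero _ (ne_of_gt hcpos)
        exact mul_ne_zero (ne_of_gt Real.pi_pos) hdz
      rcases lt_or_gt_of_ne hne with h1 | h1
      · have := Real.sin_neg_of_neg_of_neg_pi_lt h1 (by rw [abs_lt] at hlt; linarith [hlt.1])
        linarith
      · have := Real.sin_pos_of_pos_of_lt_pi h1 (by rw [abs_lt] at hlt; linarith [hlt.2])
        linarith
    -- kill B using the cos lemma on frequency |d|
    have hB0 : B = 0 := by
      rcases lt_or_gt_of_ne hdz with hneg | hpos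
      · -- d < 0: cos(d w + θ/2) = cos((-d) w + (-(θ/2)))... use evenness
        have heq : (fun w : ℝ => (2 * B * Real.sin (θ / 2)) * Real.cos (d * w + θ / 2))
            = fun w : ℝ => (2 * B * Real.sin (θ / 2)) * Real.cos ((-d) * w + (-(θ / 2))) := by
          funext w
          rw [show (-d) * w + (-(θ/2)) = -(d * w + θ/2) by ring, Real.cos_neg]
        rw [heq] at hdiff
        have := aux_cos_coeff _ (-d) (-(θ/2)) (by linarith) hdiff
        have h2 : 2 * B * Real.sin (θ/2) = 0 := this
        rcases mul_eq_zero.mp h2 with h3 | h3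
        · rcases mul_eq_zero.mp h3 with h4 | h4
          · norm_num at h4
          · exact h4
        · exact absurd h3 hsin_ne
      · have := aux_cos_coeff _ d (θ/2) hpos hdiff
        rcases mul_eq_zero.mp this with h3 | h3
        · rcases mul_eq_zero.mp h3 with h4 | h4
          · norm_num at h4
          · exact h4
        · exact absurd h3 hsin_ne
    -- now f = A sin(cw) → 0
    have h' : Tendsto (fun w : ℝ => A * Real.sin (c * w)) atTop (nhds 0) := by
      have : (fun w : ℝ => A * Real.sin (c * w) + B * Real.sin (d * w))
          = fun w : ℝ => A * Real.sin (c * w) := by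
        funext w; rw [hB0]; simp
      rwa [this] at h
    have hA0 := aux_sin_coeff A c hcpos h'
    constructor
    · have h1 : (P + Q) / 2 = 0 := hA ▸ hA0
      have h2 : (P - Q) / 2 = 0 := hB ▸ hB0
      linarith
    · have h1 : (P + Q) / 2 = 0 := hA ▸ hA0
      have h2 : (P - Q) / 2 = 0 := hB ▸ hB0
      linarith
end

section
/- Let P, Q, R, S be real numbers with R > 0 and S > 0. If P·cos(Sw)·sin(Rw) + Q·cos(Rw)·sin(Sw) → 0 as w → ∞, then P·cos(Sw)·sin(Rw) + Q·cos(Rw)·sin(Sw) = 0 for all real w. -/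
open Real Filter Topology

/-!
Product-to-sum writes the function as `a sin(αw) + b sin(βw)` with `α = R + S`, `β = R - S`,
so `|β| < α`. The second difference `f(w + t) + f(w - t) - 2 cos(βt) f(w)` kills the
`β`-term and leaves `2a (cos(αt) - cos(βt)) sin(αw)`, which still tends to `0`; at `t = π/α`
the bracket is nonzero, so `a = 0`, and then `b sin(βw) → 0` forces `b sin(βw) ≡ 0`.
A single term `c sin(αw)` with `α ≠ 0` tending to `0` has `c = 0`: shifting by a quarter
period gives `c cos(αw) → 0` too, and the squares add up to the constant `c²`.
-/

lemma tendsto_comp_add_const_atTop {G X : Type*} [AddCommGroup G] [PartialOrder G]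
    [IsOrderedAddMonoid G] {f : G → X} {l : Filter X} (h : Tendsto f atTop l) (t : G) :
    Tendsto (fun w => f (w + t)) atTop l :=
  h.comp (tendsto_atTop_add_const_right _ t tendsto_id)

lemma eq_zero_of_tendsto_mul_sin {c α : ℝ} (hα : α ≠ 0)
    (h : Tendsto (fun w => c * sin (α * w)) atTop (𝓝 0)) : c = 0 := by
  have hcos : Tendsto (fun w => c * cos (α * w)) atTop (𝓝 0) := by
    refine (tendsto_comp_add_const_atTop h (π / 2 / α)).congr fun w => ?_
    rw [mul_add, mul_div_cancel₀ _ hα, sin_add_pi_div_two]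
  have hsq : Tendsto (fun w => (c * sin (α * w)) ^ 2 + (c * cos (α * w)) ^ 2) atTop (𝓝 0) := by
    simpa using (h.pow 2).add (hcos.pow 2)
  have hconst : (fun w => (c * sin (α * w)) ^ 2 + (c * cos (α * w)) ^ 2) = fun _ => c ^ 2 := by
    funext w
    linear_combination c ^ 2 * sin_sq_add_cos_sq (α * w)
  rw [hconst, tendsto_const_nhds_iff] at hsq
  exact pow_eq_zero_iff two_ne_zero |>.mp hsq

lemma sin_mul_add_add_sin_mul_sub (α w t : ℝ) :
    sin (α * (w + t)) + sin (α * (w - t)) = 2 * cos (α * t) * sin (α * w) := by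
  rw [mul_add, mul_sub, sin_add, sin_sub]
  ring

lemma tendsto_second_difference_mul_sin {a b α β : ℝ}
    (h : Tendsto (fun w => a * sin (α * w) + b * sin (β * w)) atTop (𝓝 0)) (t : ℝ) :
    Tendsto (fun w => 2 * a * (cos (α * t) - cos (β * t)) * sin (α * w)) atTop (𝓝 0) := by
  have hdiff := ((tendsto_comp_add_const_atTop h t).add
    (tendsto_comp_add_const_atTop h (-t))).sub (h.const_mul (2 * cos (β * t)))
  simp only [add_zero, mul_zero, sub_zero, ← sub_eq_add_neg] at hdiff
  refine hdiff.congr fun w => ?_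
  linear_combination a * sin_mul_add_add_sin_mul_sub α w t
    + b * sin_mul_add_add_sin_mul_sub β w t

lemma cos_lt_cos_of_abs_lt {x y : ℝ} (hy : y ≤ π) (hxy : |x| < y) : cos y < cos x := by
  rw [← cos_abs x]
  exact cos_lt_cos_of_nonneg_of_le_pi (abs_nonneg x) hy hxy

lemma mul_sin_add_mul_sin_eq_zero_of_tendsto {a b α β : ℝ} (hβα : |β| < α)
    (h : Tendsto (fun w => a * sin (α * w) + b * sin (β * w)) atTop (𝓝 0)) (w : ℝ) :
    a * sin (α * w) + b * sin (β * w) = 0 := by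
  have hα : 0 < α := (abs_nonneg β).trans_lt hβα
  have hcos : cos (α * (π / α)) < cos (β * (π / α)) := by
    rw [mul_div_cancel₀ _ hα.ne']
    refine cos_lt_cos_of_abs_lt le_rfl ?_
    rw [abs_mul, abs_of_pos (div_pos pi_pos hα), ← mul_div_assoc, div_lt_iff₀ hα, mul_comm π α]
    exact mul_lt_mul_of_pos_right hβα pi_pos
  have ha : a = 0 := by
    have := eq_zero_of_tendsto_mul_sin hα.ne' (tendsto_second_difference_mul_sin h (π / α))
    simpa [sub_eq_zero, hcos.ne] using this
  have hb : Tendsto (fun w => b * sin (β * w)) atTop (𝓝 0) := by simpa [ha] using h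
  rcases eq_or_ne β 0 with hβ | hβ
  · simp [ha, hβ]
  · simp [ha, eq_zero_of_tendsto_mul_sin hβ hb]

theorem trig_limit_vanish (P Q R S : ℝ) (hR : R > 0) (hS : S > 0)
    (h : Tendsto (fun w : ℝ => P * Real.cos (S * w) * Real.sin (R * w)
        + Q * Real.cos (R * w) * Real.sin (S * w)) atTop (nhds 0)) :
    ∀ w : ℝ, P * Real.cos (S * w) * Real.sin (R * w)
        + Q * Real.cos (R * w) * Real.sin (S * w) = 0 := by
  have product_to_sum : ∀ w, P * cos (S * w) * sin (R * w) + Q * cos (R * w) * sin (S * w)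
      = (P + Q) / 2 * sin ((R + S) * w) + (P - Q) / 2 * sin ((R - S) * w) := fun w => by
    rw [add_mul, sub_mul, sin_add, sin_sub]
    ring
  have hRS : |R - S| < R + S := abs_sub_lt_iff.mpr ⟨by linarith, by linarith⟩
  intro w
  rw [product_to_sum]
  exact mul_sin_add_mul_sin_eq_zero_of_tendsto hRS (h.congr product_to_sum) w
end

section
/- If P and Q are nonzero real numbers, R, S > 0, and P·cos(Sw)·sin(Rw) + Q·cos(Rw)·sin(Sw) = 0 for all real w, then R = S and P + Q = 0. -/
open Real

lemma sin_step (a b α β : ℝ)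
    (H : ∀ w, a * Real.sin (α*w) + b * Real.sin (β*w) = 0) :
    ∀ w, a*α * Real.cos (α*w) + b*β * Real.cos (β*w) = 0 := by
  intro w
  have hF : ∀ x : ℝ, HasDerivAt (fun x => a * Real.sin (α*x) + b * Real.sin (β*x))
      (a * (Real.cos (α*x) * α) + b * (Real.cos (β*x) * β)) x := by
    intro x
    have h1 : HasDerivAt (fun x : ℝ => α * x) α x := by
      simpa using (hasDerivAt_id x).const_mul α
    have h2 : HasDerivAt (fun x : ℝ => β * x) β x := by
      simpa using (hasDerivAt_id x).const_mul β
    exact (((Real.hasDerivAt_sin (α*x)).comp x h1).const_mul a).add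
      (((Real.hasDerivAt_sin (β*x)).comp x h2).const_mul b)
  have hfun : (fun x => a * Real.sin (α*x) + b * Real.sin (β*x)) = fun _ : ℝ => (0:ℝ) :=
    funext H
  have h0 : HasDerivAt (fun _ : ℝ => (0:ℝ))
      (a * (Real.cos (α*w) * α) + b * (Real.cos (β*w) * β)) w := hfun ▸ hF w
  have := h0.unique (hasDerivAt_const w 0)
  linarith [this]

lemma cos_step (a b α β : ℝ)
    (H : ∀ w, a * Real.cos (α*w) + b * Real.cos (β*w) = 0) :
    ∀ w, a*α * Real.sin (α*w) + b*β * Real.sin (β*w) = 0 := by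
  intro w
  have hF : ∀ x : ℝ, HasDerivAt (fun x => a * Real.cos (α*x) + b * Real.cos (β*x))
      (a * (-Real.sin (α*x) * α) + b * (-Real.sin (β*x) * β)) x := by
    intro x
    have h1 : HasDerivAt (fun x : ℝ => α * x) α x := by
      simpa using (hasDerivAt_id x).const_mul α
    have h2 : HasDerivAt (fun x : ℝ => β * x) β x := by
      simpa using (hasDerivAt_id x).const_mul β
    exact (((Real.hasDerivAt_cos (α*x)).comp x h1).const_mul a).add
      (((Real.hasDerivAt_cos (β*x)).comp x h2).const_mul b)
  have hfun : (fun x => a * Real.cos (α*x) + b * Real.cos (β*x)) = fun _ : ℝ => (0:ℝ) :=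
    funext H
  have h0 : HasDerivAt (fun _ : ℝ => (0:ℝ))
      (a * (-Real.sin (α*w) * α) + b * (-Real.sin (β*w) * β)) w := hfun ▸ hF w
  have := h0.unique (hasDerivAt_const w 0)
  linarith [this]

theorem trig_identity_forces_equal (P Q R S : ℝ) (hP : P ≠ 0) (hQ : Q ≠ 0)
    (hR : R > 0) (hS : S > 0)
    (h : ∀ w : ℝ, P * Real.cos (S * w) * Real.sin (R * w)
        + Q * Real.cos (R * w) * Real.sin (S * w) = 0) :
    R = S ∧ P + Q = 0 := by
  set a := (P+Q)/2 with ha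
  set b := (P-Q)/2 with hb
  set α := R+S with hα
  set β := R-S with hβ
  have H0 : ∀ w, a * Real.sin (α*w) + b * Real.sin (β*w) = 0 := by
    intro w
    have e1 : α * w = R*w + S*w := by rw [hα]; ring
    have e2 : β * w = R*w - S*w := by rw [hβ]; ring
    rw [e1, e2, Real.sin_add, Real.sin_sub]
    have := h w
    rw [ha, hb]
    linear_combination this
  have H1 := sin_step a b α β H0
  have H2 := cos_step (a*α) (b*β) α β H1
  have H3 := sin_step (a*α*α) (b*β*β) α β H2
  have e1 : a*α + b*β = 0 := by simpa using H1 0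
  have e3 : a*α^3 + b*β^3 = 0 := by have := H3 0; simp at this; nlinarith [this]
  have hRS : R = S := by
    by_contra hne
    have hβ0 : β ≠ 0 := fun hc => hne (by rw [hβ] at hc; linarith)
    have hα0 : α > 0 := by rw [hα]; linarith
    have hsq : α^2 - β^2 = 4*R*S := by rw [hα, hβ]; ring
    have ha0 : a = 0 := by
      have : a * α * (α^2 - β^2) = 0 := by nlinarith [e1, e3]
      rcases mul_eq_zero.1 this with h' | h'
      · rcases mul_eq_zero.1 h' with h'' | h''
        · exact h''
        · exact absurd h'' (ne_of_gt hα0)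
      · exfalso; rw [hsq] at h'; nlinarith
    have hb0 : b = 0 := by
      have : b * β = 0 := by nlinarith [e1]
      rcases mul_eq_zero.1 this with h' | h'
      · exact h'
      · exact absurd h' hβ0
    apply hP
    rw [ha] at ha0; rw [hb] at hb0; linarith
  refine ⟨hRS, ?_⟩
  have hw := h (Real.pi / (4*R))
  rw [← hRS] at hw
  have hRne : R ≠ 0 := ne_of_gt hR
  have : R * (Real.pi / (4*R)) = Real.pi / 4 := by field_simp
  rw [this, Real.cos_pi_div_four, Real.sin_pi_div_four] at hw
  have h2 : Real.sqrt 2 > 0 := Real.sqrt_pos.2 (by norm_num)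
  nlinarith [hw, Real.sq_sqrt (by norm_num : (2:ℝ) ≥ 0), h2]
end

section
/- Let ℓ₁ ≠ ℓ₂ be positive reals and suppose B₁ = B₂ = [[b, 0], [0, 1/b]] with b > 0 in the decomposition of the transfer matrices M^E(ℓⱼ, Bⱼ) = Bⱼ·T(E, ℓⱼ). If the (2,1) entry of the commutator [M^E(ℓ₁, B₁), M^E(ℓ₂, B₂)] vanishes for all E = w² with w > 0, then (1 − b²)·w·sin(w(ℓ₁ − ℓ₂)) = 0 for all w > 0, and hence b = 1. -/
open Real Matrix

noncomputable def freeMonodromy (E ℓ : ℝ) : Matrix (Fin 2) (Fin 2) ℝ :=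
  !![Real.cos (Real.sqrt E * ℓ), Real.sin (Real.sqrt E * ℓ) / Real.sqrt E;
     -(Real.sqrt E * Real.sin (Real.sqrt E * ℓ)), Real.cos (Real.sqrt E * ℓ)]

noncomputable def diagMat (b : ℝ) : Matrix (Fin 2) (Fin 2) ℝ :=
  !![b, 0; 0, 1 / b]

/-! With `k = √E`, both transfer matrices share the factor `diagMat b`, and the (2,1) entry of
their commutator collapses by the sine subtraction formula to
`b⁻² (1 - b²) k sin (k (ℓ₁ - ℓ₂))`. Since `ℓ₁ ≠ ℓ₂`, some `w > 0` makes `w (ℓ₁ - ℓ₂) = ±π/2`,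
so the factor `1 - b²` must vanish. -/

theorem diagMat_mul_freeMonodromy_commutator_one_zero {b : ℝ} (hb : b ≠ 0) (E ℓ₁ ℓ₂ : ℝ) :
    ((diagMat b * freeMonodromy E ℓ₁) * (diagMat b * freeMonodromy E ℓ₂)
        - (diagMat b * freeMonodromy E ℓ₂) * (diagMat b * freeMonodromy E ℓ₁)) 1 0
      = b⁻¹ ^ 2 * ((1 - b ^ 2) * √E * sin (√E * (ℓ₁ - ℓ₂))) := by
  simp only [freeMonodromy, diagMat, Matrix.sub_apply, Matrix.mul_apply, Fin.sum_univ_two,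
    Matrix.of_apply, Matrix.cons_val', Matrix.cons_val_zero, Matrix.cons_val_one,
    Matrix.empty_val', Matrix.cons_val_fin_one, mul_sub, sin_sub]
  field_simp
  ring

theorem exists_pos_sin_mul_ne_zero {d : ℝ} (hd : d ≠ 0) : ∃ w > 0, sin (w * d) ≠ 0 := by
  rcases hd.lt_or_gt with hneg | hpos
  · refine ⟨-(π / (2 * d)), neg_pos.mpr (div_neg_of_pos_of_neg pi_pos (by linarith)), ?_⟩
    rw [show -(π / (2 * d)) * d = -(π / 2) by field_simp, sin_neg, sin_pi_div_two]
    norm_num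
  · refine ⟨π / (2 * d), by positivity, ?_⟩
    rw [show π / (2 * d) * d = π / 2 by field_simp, sin_pi_div_two]
    norm_num

theorem eq_zero_of_forall_mul_sin_mul_eq_zero {c d : ℝ} (hd : d ≠ 0)
    (h : ∀ w : ℝ, w > 0 → c * w * sin (w * d) = 0) : c = 0 := by
  obtain ⟨w, hw, hs⟩ := exists_pos_sin_mul_ne_zero hd
  simpa [hw.ne', hs] using h w hw

theorem diag_case_forces_b_eq_one_general (ℓ₁ ℓ₂ b : ℝ)
    (hne : ℓ₁ ≠ ℓ₂) (hb : b > 0)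
    (h : ∀ w : ℝ, w > 0 →
      ((diagMat b * freeMonodromy (w ^ 2) ℓ₁) * (diagMat b * freeMonodromy (w ^ 2) ℓ₂)
        - (diagMat b * freeMonodromy (w ^ 2) ℓ₂) * (diagMat b * freeMonodromy (w ^ 2) ℓ₁)) 1 0
        = 0) :
    (∀ w : ℝ, w > 0 → (1 - b ^ 2) * w * Real.sin (w * (ℓ₁ - ℓ₂)) = 0) ∧ b = 1 := by
  have hsin : ∀ w : ℝ, w > 0 → (1 - b ^ 2) * w * sin (w * (ℓ₁ - ℓ₂)) = 0 := by
    intro w hw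
    have hw' := h w hw
    rw [diagMat_mul_freeMonodromy_commutator_one_zero hb.ne', sqrt_sq hw.le] at hw'
    exact (mul_eq_zero.mp hw').resolve_left (by positivity)
  have hb2 : 1 - b ^ 2 = 0 := eq_zero_of_forall_mul_sin_mul_eq_zero (sub_ne_zero.mpr hne) hsin
  refine ⟨hsin, ?_⟩
  nlinarith

theorem diag_case_forces_b_eq_one (ℓ₁ ℓ₂ b : ℝ) (h₁ : ℓ₁ > 0) (h₂ : ℓ₂ > 0)
    (hne : ℓ₁ ≠ ℓ₂) (hb : b > 0)
    (h : ∀ w : ℝ, w > 0 →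
      ((diagMat b * freeMonodromy (w ^ 2) ℓ₁) * (diagMat b * freeMonodromy (w ^ 2) ℓ₂)
        - (diagMat b * freeMonodromy (w ^ 2) ℓ₂) * (diagMat b * freeMonodromy (w ^ 2) ℓ₁)) 1 0
        = 0) :
    (∀ w : ℝ, w > 0 → (1 - b ^ 2) * w * Real.sin (w * (ℓ₁ - ℓ₂)) = 0) ∧ b = 1 :=
  diag_case_forces_b_eq_one_general ℓ₁ ℓ₂ b hne hb h
end

section
/- Fix ℓ > 0 and b₁, b₂ > 0, q₁, q₂ ∈ ℝ, and set Bⱼ = D(bⱼ)·S(qⱼ) = [[bⱼ, 0], [qⱼ/bⱼ, 1/bⱼ]]. If the (1,1) entry of the commutator [B₁·T(w², ℓ), B₂·T(w², ℓ)] vanishes for all w > 0, then b₁ = b₂ and q₁ = q₂. -/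
open Real Matrix

noncomputable def lowerTri (b q : ℝ) : Matrix (Fin 2) (Fin 2) ℝ :=
  !![b, 0; q / b, 1 / b]

/-!
Write `Mⱼ = Bⱼ T(w², ℓ)` and `θ = wℓ`. The diagonal products cancel in the (1,1) entry of a
2×2 commutator, leaving `(M₁)₀₁ (M₂)₁₀ - (M₂)₀₁ (M₁)₁₀`, which works out to
`(sin θ / w) (cos θ (b₁q₂/b₂ - b₂q₁/b₁) - w sin θ (b₁/b₂ - b₂/b₁))`.
At `θ = π/2` only the second term survives and forces `b₁/b₂ = b₂/b₁`, i.e. `b₁ = b₂`;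
then at `θ = π/4` the first term gives `q₁ = q₂`.
-/

theorem Matrix.commutator_fin_two_apply_zero_zero {R : Type*} [CommRing R]
    (A B : Matrix (Fin 2) (Fin 2) R) :
    (A * B - B * A) 0 0 = A 0 1 * B 1 0 - B 0 1 * A 1 0 := by
  simp only [sub_apply, mul_apply, Fin.sum_univ_two]
  ring

theorem freeMonodromy_sq {w : ℝ} (hw : 0 ≤ w) (ℓ : ℝ) :
    freeMonodromy (w ^ 2) ℓ = !![cos (w * ℓ), sin (w * ℓ) / w; -(w * sin (w * ℓ)), cos (w * ℓ)] := by
  rw [freeMonodromy, Real.sqrt_sq hw]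

theorem lowerTri_mul_apply_zero_one (b q : ℝ) (M : Matrix (Fin 2) (Fin 2) ℝ) :
    (lowerTri b q * M) 0 1 = b * M 0 1 := by
  simp [lowerTri, mul_apply, Fin.sum_univ_two]

theorem lowerTri_mul_apply_one_zero (b q : ℝ) (M : Matrix (Fin 2) (Fin 2) ℝ) :
    (lowerTri b q * M) 1 0 = q / b * M 0 0 + 1 / b * M 1 0 := by
  simp [lowerTri, mul_apply, Fin.sum_univ_two]

theorem commutator_lowerTri_mul_freeMonodromy_apply_zero_zero {w : ℝ} (hw : 0 < w)
    (ℓ b₁ b₂ q₁ q₂ : ℝ) :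
    ((lowerTri b₁ q₁ * freeMonodromy (w ^ 2) ℓ) * (lowerTri b₂ q₂ * freeMonodromy (w ^ 2) ℓ)
        - (lowerTri b₂ q₂ * freeMonodromy (w ^ 2) ℓ) * (lowerTri b₁ q₁ * freeMonodromy (w ^ 2) ℓ)) 0 0
      = sin (w * ℓ) / w * (cos (w * ℓ) * (b₁ * q₂ / b₂ - b₂ * q₁ / b₁)
          - w * sin (w * ℓ) * (b₁ / b₂ - b₂ / b₁)) := by
  simp only [Matrix.commutator_fin_two_apply_zero_zero, lowerTri_mul_apply_zero_one,
    lowerTri_mul_apply_one_zero, freeMonodromy_sq hw.le, of_apply, cons_val', cons_val_zero,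
    cons_val_one, empty_val', cons_val_fin_one]
  field_simp
  ring

theorem eq_of_div_eq_div_swap {a b : ℝ} (ha : 0 < a) (hb : 0 < b) (h : a / b = b / a) :
    a = b := by
  rw [div_eq_div_iff hb.ne' ha.ne'] at h
  exact (mul_self_inj ha.le hb.le).mp h

theorem equal_length_lower_triangular_case (ℓ b₁ b₂ q₁ q₂ : ℝ)
    (hℓ : ℓ > 0) (hb₁ : b₁ > 0) (hb₂ : b₂ > 0)
    (h : ∀ w : ℝ, w > 0 →
      ((lowerTri b₁ q₁ * freeMonodromy (w ^ 2) ℓ) * (lowerTri b₂ q₂ * freeMonodromy (w ^ 2) ℓ)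
        - (lowerTri b₂ q₂ * freeMonodromy (w ^ 2) ℓ) * (lowerTri b₁ q₁ * freeMonodromy (w ^ 2) ℓ)) 0 0
        = 0) :
    b₁ = b₂ ∧ q₁ = q₂ := by
  have at_angle : ∀ θ > 0, sin θ ≠ 0 →
      cos θ * (b₁ * q₂ / b₂ - b₂ * q₁ / b₁) = θ / ℓ * sin θ * (b₁ / b₂ - b₂ / b₁) := by
    intro θ hθ hsin
    have hw : θ / ℓ > 0 := div_pos hθ hℓ
    have hzero := h _ hw
    rw [commutator_lowerTri_mul_freeMonodromy_apply_zero_zero hw, div_mul_cancel₀ θ hℓ.ne'] at hzero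
    exact sub_eq_zero.mp ((mul_eq_zero.mp hzero).resolve_left (div_ne_zero hsin hw.ne'))
  have hb : b₁ = b₂ := by
    have hπ2 := at_angle (π / 2) (by positivity) (by simp)
    have hw : π / 2 / ℓ ≠ 0 := by positivity
    simp only [sin_pi_div_two, cos_pi_div_two, zero_mul, mul_one, zero_eq_mul, hw, false_or,
      sub_eq_zero] at hπ2
    exact eq_of_div_eq_div_swap hb₁ hb₂ hπ2
  subst hb
  refine ⟨rfl, ?_⟩
  have hπ4 := at_angle (π / 4) (by positivity) (by simp)
  have hcos : cos (π / 4) ≠ 0 := by rw [cos_pi_div_four]; positivity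
  rw [sub_self, mul_zero, mul_eq_zero, or_iff_right hcos, mul_div_cancel_left₀ _ hb₁.ne',
    mul_div_cancel_left₀ _ hb₁.ne', sub_eq_zero] at hπ4
  exact hπ4.symm
end

section
/- Let ℓ₁, ℓ₂ > 0 with ℓ₁ ≠ ℓ₂, let b₁, b₂ > 0 and q₁, q₂ ∈ ℝ, and set Bⱼ = D(bⱼ)·S(qⱼ). If the function w ↦ (b₂² − b₁²)·sin(ℓ₁w)·sin(ℓ₂w) + (1/w)·(b₁²q₂·sin(ℓ₁w)·cos(ℓ₂w) − b₂²q₁·cos(ℓ₁w)·sin(ℓ₂w)) vanishes identically for w > 0, then b₁ = b₂ and q₁ = q₂ = 0. -/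
open Real

/-!
Multiplying the identity by `2w` and using the product-to-sum formulas turns it into
`A w (cos (d w) - cos (s w)) + P sin (s w) + Q sin (d w) = 0` with `s = ℓ₁ + ℓ₂`, `d = ℓ₁ - ℓ₂`,
`A = b₂² - b₁²`, `P = b₁² q₂ - b₂² q₁`, `Q = b₁² q₂ + b₂² q₁`; the left side is odd, so this holds
for every real `w`. Functions of the form `(a + e x) sin (c x) + (b + f x) cos (c x)` are closed under
differentiation, and the first, third and fifth derivatives at `0` give three linear equations in
`A, P, Q` whose determinant is a nonzero multiple of `s d (s² - d²)² (s² + d²)`.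
-/

noncomputable def affineTrig (c a b e f x : ℝ) : ℝ :=
  (a + e * x) * sin (c * x) + (b + f * x) * cos (c * x)

theorem affineTrig_zero (c a b e f : ℝ) : affineTrig c a b e f 0 = b := by
  simp [affineTrig]

theorem affineTrig_neg (c a f x : ℝ) : affineTrig c a 0 0 f (-x) = -affineTrig c a 0 0 f x := by
  simp only [affineTrig, mul_neg, sin_neg, cos_neg]
  ring

theorem hasDerivAt_affineTrig (c a b e f x : ℝ) :
    HasDerivAt (affineTrig c a b e f)
      (affineTrig c (e - c * b) (c * a + f) (-(c * f)) (c * e) x) x := by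
  have hlin : HasDerivAt (fun x => c * x) c x := by simpa using (hasDerivAt_id x).const_mul c
  have hsin : HasDerivAt (fun x => sin (c * x)) (cos (c * x) * c) x :=
    (hasDerivAt_sin (c * x)).comp x hlin
  have hcos : HasDerivAt (fun x => cos (c * x)) (-sin (c * x) * c) x :=
    (hasDerivAt_cos (c * x)).comp x hlin
  have haff (p q : ℝ) : HasDerivAt (fun x => p + q * x) q x := by
    simpa using ((hasDerivAt_id x).const_mul q).const_add p
  exact (((haff a e).mul hsin).add ((haff b f).mul hcos)).congr_deriv
    (by simp only [affineTrig]; ring)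

theorem affineTrig_add_affineTrig_deriv_eq_zero {c a b e f c' a' b' e' f' : ℝ}
    (h : ∀ x, affineTrig c a b e f x + affineTrig c' a' b' e' f' x = 0) (x : ℝ) :
    affineTrig c (e - c * b) (c * a + f) (-(c * f)) (c * e) x
      + affineTrig c' (e' - c' * b') (c' * a' + f') (-(c' * f')) (c' * e') x = 0 := by
  have hzero : affineTrig c a b e f + affineTrig c' a' b' e' f' = fun _ => 0 := funext h
  have hderiv := (hasDerivAt_affineTrig c a b e f x).add (hasDerivAt_affineTrig c' a' b' e' f' x)
  rw [hzero] at hderiv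
  exact hderiv.unique (hasDerivAt_const x 0)

theorem eq_zero_of_affineTrig_add_affineTrig_eq_zero {s d A P Q : ℝ} (hs : s ≠ 0) (hd : d ≠ 0)
    (hsd : s ^ 2 ≠ d ^ 2) (h : ∀ x, affineTrig s P 0 0 (-A) x + affineTrig d Q 0 0 A x = 0) :
    A = 0 ∧ P = 0 ∧ Q = 0 := by
  have h₁ := affineTrig_add_affineTrig_deriv_eq_zero h
  have h₂ := affineTrig_add_affineTrig_deriv_eq_zero h₁
  have h₃ := affineTrig_add_affineTrig_deriv_eq_zero h₂
  have h₄ := affineTrig_add_affineTrig_deriv_eq_zero h₃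
  have h₅ := affineTrig_add_affineTrig_deriv_eq_zero h₄
  have e₁ := h₁ 0
  have e₃ := h₃ 0
  have e₅ := h₅ 0
  simp only [affineTrig_zero] at e₁ e₃ e₅
  have hsd' : s ^ 2 - d ^ 2 ≠ 0 := sub_ne_zero.mpr hsd
  have hsd₂ : s ^ 2 + d ^ 2 ≠ 0 := by positivity
  have h3A : 3 * A = s * P := mul_right_cancel₀ hsd' (by linear_combination e₃ + d ^ 2 * e₁)
  have h5A : 5 * A = s * P :=
    mul_right_cancel₀ (mul_ne_zero hsd' hsd₂) (by linear_combination -e₅ + d ^ 4 * e₁)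
  have hA : A = 0 := by linarith
  have hP : P = 0 := (mul_eq_zero.mp (by linarith : s * P = 0)).resolve_left hs
  have hQ : Q = 0 := (mul_eq_zero.mp (by linear_combination e₁ - hP * s : d * Q = 0)).resolve_left hd
  exact ⟨hA, hP, hQ⟩

theorem two_mul_mul_sin_sin_add_div_eq_affineTrig (ℓ₁ ℓ₂ A B C : ℝ) {w : ℝ} (hw : w ≠ 0) :
    2 * w * (A * sin (ℓ₁ * w) * sin (ℓ₂ * w)
      + (1 / w) * (B * sin (ℓ₁ * w) * cos (ℓ₂ * w) - C * cos (ℓ₁ * w) * sin (ℓ₂ * w)))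
      = affineTrig (ℓ₁ + ℓ₂) (B - C) 0 0 (-A) w + affineTrig (ℓ₁ - ℓ₂) (B + C) 0 0 A w := by
  simp only [affineTrig, add_mul, sub_mul, sin_add, cos_add, sin_sub, cos_sub]
  field_simp
  ring

theorem affineTrig_add_affineTrig_eq_zero_of_pos {c a f c' a' f' : ℝ}
    (h : ∀ x > 0, affineTrig c a 0 0 f x + affineTrig c' a' 0 0 f' x = 0) (x : ℝ) :
    affineTrig c a 0 0 f x + affineTrig c' a' 0 0 f' x = 0 := by
  rcases lt_trichotomy x 0 with hx | rfl | hx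
  · have hneg := h (-x) (neg_pos.mpr hx)
    rw [affineTrig_neg, affineTrig_neg] at hneg
    linarith
  · simp [affineTrig_zero]
  · exact h x hx

theorem distinct_length_lower_triangular_case (ℓ₁ ℓ₂ b₁ b₂ q₁ q₂ : ℝ)
    (h₁ : ℓ₁ > 0) (h₂ : ℓ₂ > 0) (hne : ℓ₁ ≠ ℓ₂) (hb₁ : b₁ > 0) (hb₂ : b₂ > 0)
    (h : ∀ w : ℝ, w > 0 →
      (b₂ ^ 2 - b₁ ^ 2) * Real.sin (ℓ₁ * w) * Real.sin (ℓ₂ * w)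
        + (1 / w) * (b₁ ^ 2 * q₂ * Real.sin (ℓ₁ * w) * Real.cos (ℓ₂ * w)
          - b₂ ^ 2 * q₁ * Real.cos (ℓ₁ * w) * Real.sin (ℓ₂ * w)) = 0) :
    b₁ = b₂ ∧ q₁ = 0 ∧ q₂ = 0 := by
  have hpos : ∀ w > 0,
      affineTrig (ℓ₁ + ℓ₂) (b₁ ^ 2 * q₂ - b₂ ^ 2 * q₁) 0 0 (-(b₂ ^ 2 - b₁ ^ 2)) w
        + affineTrig (ℓ₁ - ℓ₂) (b₁ ^ 2 * q₂ + b₂ ^ 2 * q₁) 0 0 (b₂ ^ 2 - b₁ ^ 2) w = 0 := by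
    intro w hw
    rw [← two_mul_mul_sin_sin_add_div_eq_affineTrig _ _ _ _ _ hw.ne', h w hw, mul_zero]
  obtain ⟨hA, hP, hQ⟩ := eq_zero_of_affineTrig_add_affineTrig_eq_zero (by positivity)
    (sub_ne_zero.mpr hne) (by nlinarith [mul_pos h₁ h₂])
    (affineTrig_add_affineTrig_eq_zero_of_pos hpos)
  refine ⟨(pow_left_inj₀ hb₁.le hb₂.le two_ne_zero).mp (by linarith), ?_, ?_⟩
  · exact (mul_eq_zero.mp (by linarith : b₂ ^ 2 * q₁ = 0)).resolve_left (by positivity)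
  · exact (mul_eq_zero.mp (by linarith : b₁ ^ 2 * q₂ = 0)).resolve_left (by positivity)
end

section
/- Let ℓ₁ ≠ ℓ₂ be positive reals, x₁, x₂ ∈ ℝ. If x₂·cos(ℓ₁w)·sin(ℓ₂w) − x₁·sin(ℓ₁w)·cos(ℓ₂w) → 0 as w → ∞, then x₁ = x₂ = 0. -/
open Real Filter

private lemma cos_limit_aux (C γ c : ℝ) (hγ : 0 < γ)
    (h : Tendsto (fun w => C * Real.cos (γ * w + c)) atTop (nhds 0)) : C = 0 := by
  have hs : Tendsto (fun n : ℕ => (2 * π * n + -c) / γ) atTop atTop := by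
    apply Tendsto.atTop_div_const hγ
    apply tendsto_atTop_add_const_right
    exact Tendsto.const_mul_atTop (by positivity) tendsto_natCast_atTop_atTop
  have h2 := h.comp hs
  have h3 : ((fun w => C * Real.cos (γ * w + c)) ∘ fun n : ℕ => (2 * π * n + -c) / γ)
      = fun _ : ℕ => C := by
    funext n
    have e : γ * ((2 * π * n + -c) / γ) + c = n * (2 * π) := by
      field_simp
      ring
    simp only [Function.comp_apply, e, Real.cos_nat_mul_two_pi, mul_one]
  rw [h3] at h2
  exact tendsto_nhds_unique tendsto_const_nhds h2

private lemma sin_shift_aux (x t : ℝ) :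
    Real.sin (x + t + t) - Real.sin x = 2 * Real.sin t * Real.cos (x + t) := by
  rw [Real.sin_add (x + t) t]
  nth_rewrite 3 [show x = (x + t) - t by ring]
  rw [Real.sin_sub]
  ring

theorem leading_term_limit_forces_zero (ℓ₁ ℓ₂ x₁ x₂ : ℝ)
    (h₁ : ℓ₁ > 0) (h₂ : ℓ₂ > 0) (hne : ℓ₁ ≠ ℓ₂)
    (h : Tendsto (fun w : ℝ => x₂ * Real.cos (ℓ₁ * w) * Real.sin (ℓ₂ * w)
        - x₁ * Real.sin (ℓ₁ * w) * Real.cos (ℓ₂ * w)) atTop (nhds 0)) :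
    x₁ = 0 ∧ x₂ = 0 := by
  set α := ℓ₁ + ℓ₂ with hαdef
  set β := ℓ₁ - ℓ₂ with hβdef
  set A := (x₂ - x₁) / 2 with hAdef
  set B := -(x₁ + x₂) / 2 with hBdef
  have hα : 0 < α := by rw [hαdef]; linarith
  have hβ : β ≠ 0 := sub_ne_zero.mpr hne
  have hβlt : β < α := by rw [hαdef, hβdef]; linarith
  have hβgt : -α < β := by rw [hαdef, hβdef]; linarith
  have hF : Tendsto (fun w => A * Real.sin (α * w) + B * Real.sin (β * w)) atTop (nhds 0) := by
    refine h.congr fun w => ?_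
    rw [show α * w = ℓ₁ * w + ℓ₂ * w by rw [hαdef]; ring,
        show β * w = ℓ₁ * w - ℓ₂ * w by rw [hβdef]; ring,
        Real.sin_add, Real.sin_sub, hAdef, hBdef]
    ring
  set c := π * β / α with hcdef
  have hshift : Tendsto (fun w : ℝ => w + 2 * π / α) atTop atTop :=
    tendsto_atTop_add_const_right _ _ tendsto_id
  have h1 : Tendsto (fun w => (2 * B * Real.sin c) * Real.cos (β * w + c)) atTop (nhds 0) := by
    have h2 := (hF.comp hshift).sub hF
    rw [sub_zero] at h2
    refine h2.congr fun w => ?_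
    simp only [Function.comp_apply]
    have e1 : α * (w + 2 * π / α) = α * w + 2 * π := by
      field_simp
    have e2 : β * (w + 2 * π / α) = β * w + c + c := by
      rw [hcdef]
      field_simp
      ring
    rw [e1, e2, Real.sin_add_two_pi]
    linear_combination B * sin_shift_aux (β * w) c
  have hsc : Real.sin c ≠ 0 := by
    rcases lt_or_gt_of_ne hβ with hb | hb
    · have hc0 : -π < c := by
        rw [hcdef, lt_div_iff₀ hα]
        nlinarith [Real.pi_pos]
      have hcπ : c < 0 := by
        rw [hcdef]
        apply div_neg_of_neg_of_pos _ hα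
        nlinarith [Real.pi_pos]
      have : Real.sin (-c) > 0 := Real.sin_pos_of_pos_of_lt_pi (by linarith) (by linarith)
      rw [Real.sin_neg] at this
      linarith [this]
    · have hc0 : 0 < c := by
        rw [hcdef]
        apply div_pos _ hα
        nlinarith [Real.pi_pos]
      have hcπ : c < π := by
        rw [hcdef, div_lt_iff₀ hα]
        nlinarith [Real.pi_pos]
      exact ne_of_gt (Real.sin_pos_of_pos_of_lt_pi hc0 hcπ)
  have hB0 : B = 0 := by
    have hC : 2 * B * Real.sin c = 0 := by
      rcases lt_or_gt_of_ne hβ with hb | hb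
      · apply cos_limit_aux _ (-β) (-c) (by linarith)
        refine h1.congr fun w => ?_
        rw [show -β * w + -c = -(β * w + c) by ring, Real.cos_neg]
      · exact cos_limit_aux _ β c hb h1
    rcases mul_eq_zero.mp hC with h' | h'
    · rcases mul_eq_zero.mp h' with h'' | h''
      · norm_num at h''
      · exact h''
    · exact absurd h' hsc
  have hA0 : A = 0 := by
    apply cos_limit_aux _ α (-(π / 2)) hα
    refine hF.congr fun w => ?_
    rw [hB0, zero_mul, add_zero,
        show α * w + -(π / 2) = α * w - π / 2 by ring, Real.cos_sub_pi_div_two]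
  rw [hAdef] at hA0
  rw [hBdef] at hB0
  constructor <;> linarith
end

section
/- Let B₁, B₂ ∈ SL(2, ℝ) and ℓ₁, ℓ₂ > 0, and define M^E(ℓ, B) = B·T(E, ℓ) where T is the free monodromy matrix. If the commutator [M^{w²}(ℓ₁, B₁), M^{w²}(ℓ₂, B₂)] = 0 for all w > 0, then either (ℓ₁ = ℓ₂ and B₁ = ±B₂) or (B₁, B₂ ∈ {I, −I}). -/
open Real Matrix

noncomputable def transferM (E ℓ : ℝ) (B : Matrix (Fin 2) (Fin 2) ℝ) :
    Matrix (Fin 2) (Fin 2) ℝ := B * freeMonodromy E ℓ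

/-!
Writing `E = w²`, the free monodromy `T(w², ℓ)` is an analytic function of `w`, and at `w = t i`
it becomes the hyperbolic monodromy
`H(t, ℓ) = [[cosh tℓ, sinh tℓ / t], [t sinh tℓ, cosh tℓ]]`; so the commutator vanishes for these as
well. For fixed `t` all `H(t, ℓ)` are diagonalised by the same matrix, with eigenvalues `e^{± tℓ}`.
In that basis `B₁, B₂` become matrices of polynomials in `t`, and the `(1, 0)` entry of the
commutator, divided by `e^{(ℓ₁ + ℓ₂) t}`, reads `D + U e^{-2ℓ₁t} = V e^{-2ℓ₂t}` with polynomials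
`D, U, V`. Letting `t → ∞` gives `D = 0`, and then `U = V` if `ℓ₁ = ℓ₂`, while `U = V = 0`
otherwise. The coefficients of `D` and `U - V` are the `2 × 2` minors of the pair `(B₁, B₂)`, which
forces `B₁ = ±B₂` when `det = 1`; and `U = V = 0` forces both `B₁, B₂` to be scalar, i.e. `±1`.
-/

open Filter Topology Polynomial Asymptotics

namespace Polynomial

lemma eq_of_forall_pos_eval_eq {p q : ℝ[X]} (h : ∀ t > 0, p.eval t = q.eval t) : p = q :=
  eq_of_infinite_eval_eq p q ((Set.Ioi_infinite 0).mono fun t ht => h t ht)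

lemma eq_zero_of_tendsto_atTop_zero {p : ℝ[X]} (h : Tendsto (fun t => p.eval t) atTop (𝓝 0)) :
    p = 0 :=
  leadingCoeff_eq_zero.mp (p.tendsto_nhds_iff.mp h).1

lemma tendsto_eval_mul_exp_neg (p : ℝ[X]) {c : ℝ} (hc : 0 < c) :
    Tendsto (fun t => p.eval t * exp (-(c * t))) atTop (𝓝 0) := by
  have hp : (fun t => p.eval t) =O[atTop] fun t => t ^ p.natDegree := by
    simpa using isBigO_atTop_of_degree_le p (X ^ p.natDegree) (by simp [degree_le_natDegree])
  simpa [div_eq_mul_inv, ← exp_neg] using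
    (hp.trans_isLittleO (isLittleO_pow_exp_pos_mul_atTop _ hc)).tendsto_div_nhds_zero

lemma eq_zero_of_eval_eq_eval_mul_exp_neg {p q : ℝ[X]} {c : ℝ} (hc : 0 < c)
    (h : ∀ t > 0, p.eval t = q.eval t * exp (-(c * t))) : p = 0 ∧ q = 0 := by
  have hp : p = 0 := eq_zero_of_tendsto_atTop_zero <|
    (q.tendsto_eval_mul_exp_neg hc).congr' <| (eventually_gt_atTop 0).mono fun t ht => (h t ht).symm
  refine ⟨hp, eq_of_forall_pos_eval_eq fun t ht => ?_⟩
  simpa [hp, (exp_pos _).ne'] using (h t ht).symm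

lemma eq_zero_of_eval_add_mul_exp_neg_eq {D U V : ℝ[X]} {c₁ c₂ : ℝ} (hc₁ : 0 < c₁) (hc₂ : 0 < c₂)
    (h : ∀ t > 0, D.eval t + U.eval t * exp (-(c₁ * t)) = V.eval t * exp (-(c₂ * t))) :
    D = 0 := by
  refine eq_zero_of_tendsto_atTop_zero ?_
  have := (V.tendsto_eval_mul_exp_neg hc₂).sub (U.tendsto_eval_mul_exp_neg hc₁)
  rw [sub_zero] at this
  exact this.congr' <| (eventually_gt_atTop 0).mono fun t ht => by rw [← h t ht]; ring

lemma eq_zero_of_eval_mul_exp_neg_eq {U V : ℝ[X]} {c₁ c₂ : ℝ} (hc : c₁ < c₂)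
    (h : ∀ t > 0, U.eval t * exp (-(c₁ * t)) = V.eval t * exp (-(c₂ * t))) :
    U = 0 ∧ V = 0 := by
  refine eq_zero_of_eval_eq_eval_mul_exp_neg (sub_pos.mpr hc) fun t ht => ?_
  have := h t ht
  rw [show -(c₂ * t) = -((c₂ - c₁) * t) + -(c₁ * t) by ring, exp_add] at this
  exact mul_right_cancel₀ (exp_pos _).ne' (by rw [this]; ring)

lemma C_mul_X_sq_add_C_mul_X_add_C_eq_zero_iff {a b c : ℝ} :
    C a * X ^ 2 + C b * X + C c = 0 ↔ a = 0 ∧ b = 0 ∧ c = 0 := by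
  refine ⟨fun h => ⟨?_, ?_, ?_⟩, fun ⟨ha, hb, hc⟩ => by simp [ha, hb, hc]⟩
  · simpa using congrArg (coeff · 2) h
  · simpa using congrArg (coeff · 1) h
  · simpa using congrArg (coeff · 0) h

end Polynomial

lemma Complex.eq_zero_of_differentiableOn_compl_zero {f : ℂ → ℂ}
    (hf : DifferentiableOn ℂ f {0}ᶜ) (h : ∀ w : ℝ, 0 < w → f w = 0) {z : ℂ} (hz : z ≠ 0) :
    f z = 0 := by
  have hreal : Tendsto (fun w : ℝ => (w : ℂ)) (𝓝[>] (1 : ℝ)) (𝓝[≠] 1) :=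
    tendsto_nhdsWithin_of_tendsto_nhds_of_eventually_within _
      (Complex.continuous_ofReal.tendsto' 1 1 (by simp) |>.mono_left nhdsWithin_le_nhds)
      (eventually_nhdsWithin_of_forall fun w hw => by simpa using hw.ne')
  have hfreq : ∃ᶠ z in 𝓝[≠] (1 : ℂ), f z = 0 :=
    hreal.frequently (eventually_nhdsWithin_of_forall (s := Set.Ioi 1)
      fun w hw => h w (one_pos.trans hw)).frequently
  exact (hf.analyticOnNhd isOpen_compl_singleton).eqOn_zero_of_preconnected_of_frequently_eq_zero
    (isConnected_compl_singleton_of_one_lt_rank (by simp) 0).isPreconnected (by simp) hfreq hz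

lemma differentiableOn_mul_apply {U : Set ℂ} {f g : ℂ → Matrix (Fin 2) (Fin 2) ℂ}
    (hf : ∀ i j, DifferentiableOn ℂ (fun s => f s i j) U)
    (hg : ∀ i j, DifferentiableOn ℂ (fun s => g s i j) U) (i j : Fin 2) :
    DifferentiableOn ℂ (fun s => (f s * g s) i j) U := by
  simp only [Matrix.mul_apply]
  fun_prop

lemma lie_mul_diagonal_apply_one_zero {R : Type*} [CommRing R]
    (G₁ G₂ : Matrix (Fin 2) (Fin 2) R) (x₁ y₁ x₂ y₂ : R) :
    ⁅G₁ * diagonal ![x₁, y₁], G₂ * diagonal ![x₂, y₂]⁆ 1 0 =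
      (G₁ 1 0 * G₂ 0 0 - G₂ 1 0 * G₁ 0 0) * x₁ * x₂ + G₁ 1 1 * G₂ 1 0 * y₁ * x₂
        - G₂ 1 1 * G₁ 1 0 * y₂ * x₁ := by
  simp [Ring.lie_def, Matrix.mul_apply, Fin.sum_univ_two]; ring

lemma lie_conj_mul_eq_zero {n K : Type*} [Fintype n] [DecidableEq n] [Field K]
    {P Q B₁ B₂ H₁ H₂ Λ₁ Λ₂ : Matrix n n K} {c : K} (hc : c ≠ 0) (hPQ : P * Q = c • 1)
    (h₁ : c • H₁ = Q * Λ₁ * P) (h₂ : c • H₂ = Q * Λ₂ * P) (h : ⁅B₁ * H₁, B₂ * H₂⁆ = 0) :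
    ⁅P * B₁ * Q * Λ₁, P * B₂ * Q * Λ₂⁆ = 0 := by
  have key : ∀ {B B' H H' Λ Λ' : Matrix n n K}, c • H = Q * Λ * P → c • H' = Q * Λ' * P →
      c • (P * B * Q * Λ * (P * B' * Q * Λ')) = c ^ 2 • (P * (B * H * (B' * H')) * Q) := by
    intro B B' H H' Λ Λ' hH hH'
    calc c • (P * B * Q * Λ * (P * B' * Q * Λ'))
        = P * B * Q * Λ * (P * B' * Q * Λ') * (P * Q) := by rw [hPQ, Matrix.mul_smul, mul_one]
      _ = P * B * (Q * Λ * P) * B' * (Q * Λ' * P) * Q := by simp only [Matrix.mul_assoc]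
      _ = c ^ 2 • (P * (B * H * (B' * H')) * Q) := by
        rw [← hH, ← hH']
        simp only [Matrix.mul_smul, Matrix.smul_mul, smul_smul, Matrix.mul_assoc, sq]
  have hconj : c • ⁅P * B₁ * Q * Λ₁, P * B₂ * Q * Λ₂⁆ = c ^ 2 • (P * ⁅B₁ * H₁, B₂ * H₂⁆ * Q) := by
    rw [Ring.lie_def, Ring.lie_def, smul_sub, key h₁ h₂, key h₂ h₁, Matrix.mul_sub,
      Matrix.sub_mul, smul_sub]
  rw [h, Matrix.mul_zero, Matrix.zero_mul, smul_zero] at hconj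
  exact (smul_eq_zero.mp hconj).resolve_left hc

-- `freeMonodromy (s ^ 2) ℓ` for `s > 0`; the junk value `sin (s ℓ) / s = 0` at `s = 0` makes it
-- analytic only on `{0}ᶜ`.
noncomputable def complexMonodromy (ℓ : ℝ) (s : ℂ) : Matrix (Fin 2) (Fin 2) ℂ :=
  !![Complex.cos (s * ℓ), Complex.sin (s * ℓ) / s;
     -(s * Complex.sin (s * ℓ)), Complex.cos (s * ℓ)]

noncomputable def hyperbolicMonodromy (t ℓ : ℝ) : Matrix (Fin 2) (Fin 2) ℝ :=
  !![cosh (t * ℓ), sinh (t * ℓ) / t; t * sinh (t * ℓ), cosh (t * ℓ)]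

lemma complexMonodromy_ofReal {w : ℝ} (hw : 0 < w) (ℓ : ℝ) :
    complexMonodromy ℓ w = Complex.ofRealHom.mapMatrix (freeMonodromy (w ^ 2) ℓ) := by
  rw [freeMonodromy, sqrt_sq hw.le, complexMonodromy]
  ext i j; fin_cases i <;> fin_cases j <;> simp

lemma complexMonodromy_mul_I (t ℓ : ℝ) :
    complexMonodromy ℓ (t * Complex.I) = Complex.ofRealHom.mapMatrix (hyperbolicMonodromy t ℓ) := by
  have h : (t * Complex.I : ℂ) * ℓ = (t * ℓ : ℝ) * Complex.I := by push_cast; ring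
  rw [complexMonodromy, hyperbolicMonodromy, h]
  ext i j; fin_cases i <;> fin_cases j
  all_goals simp [Complex.cos_mul_I, Complex.sin_mul_I]
  · exact mul_div_mul_right _ _ Complex.I_ne_zero
  · linear_combination (-(t * Complex.sinh (t * ℓ))) * Complex.I_sq

lemma differentiableOn_complexMonodromy (ℓ : ℝ) (i j : Fin 2) :
    DifferentiableOn ℂ (fun s => complexMonodromy ℓ s i j) {0}ᶜ := by
  fin_cases i <;> fin_cases j <;> simp only [complexMonodromy] <;> simp <;>
    fun_prop (disch := exact fun _ => id)

open Complex in
lemma lie_hyperbolicMonodromy_eq_zero {ℓ₁ ℓ₂ : ℝ} {B₁ B₂ : Matrix (Fin 2) (Fin 2) ℝ}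
    (h : ∀ w > 0, ⁅B₁ * freeMonodromy (w ^ 2) ℓ₁, B₂ * freeMonodromy (w ^ 2) ℓ₂⁆ = 0)
    {t : ℝ} (ht : t ≠ 0) :
    ⁅B₁ * hyperbolicMonodromy t ℓ₁, B₂ * hyperbolicMonodromy t ℓ₂⁆ = 0 := by
  have hmap : ∀ H₁ H₂ : Matrix (Fin 2) (Fin 2) ℝ,
      ⁅ofRealHom.mapMatrix B₁ * ofRealHom.mapMatrix H₁,
        ofRealHom.mapMatrix B₂ * ofRealHom.mapMatrix H₂⁆ =
        ofRealHom.mapMatrix ⁅B₁ * H₁, B₂ * H₂⁆ := by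
    intro H₁ H₂
    simp only [Ring.lie_def, map_sub, map_mul]
  ext i j
  have hX : ∀ (B : Matrix (Fin 2) (Fin 2) ℝ) (ℓ : ℝ) (i j : Fin 2),
      DifferentiableOn ℂ (fun s => (ofRealHom.mapMatrix B * complexMonodromy ℓ s) i j) {0}ᶜ :=
    fun B ℓ => differentiableOn_mul_apply (fun _ _ => differentiableOn_const _)
      (differentiableOn_complexMonodromy ℓ)
  have hf : DifferentiableOn ℂ (fun s => ⁅ofRealHom.mapMatrix B₁ * complexMonodromy ℓ₁ s,
      ofRealHom.mapMatrix B₂ * complexMonodromy ℓ₂ s⁆ i j) {0}ᶜ := by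
    simp only [Ring.lie_def, Matrix.sub_apply]
    exact (differentiableOn_mul_apply (hX B₁ ℓ₁) (hX B₂ ℓ₂) i j).sub
      (differentiableOn_mul_apply (hX B₂ ℓ₂) (hX B₁ ℓ₁) i j)
  have := Complex.eq_zero_of_differentiableOn_compl_zero hf
    (fun w hw => by
      rw [complexMonodromy_ofReal hw, complexMonodromy_ofReal hw, hmap, h w hw, map_zero]
      rfl) (z := t * Complex.I) (by simp [ht])
  rw [complexMonodromy_mul_I, complexMonodromy_mul_I, hmap] at this
  simpa using this

def eigenRows (t : ℝ) : Matrix (Fin 2) (Fin 2) ℝ := !![t, 1; t, -1]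

def eigenCols (t : ℝ) : Matrix (Fin 2) (Fin 2) ℝ := !![1, 1; t, -t]

lemma eigenRows_mul_eigenCols (t : ℝ) :
    eigenRows t * eigenCols t = (2 * t) • (1 : Matrix (Fin 2) (Fin 2) ℝ) := by
  ext i j; fin_cases i <;> fin_cases j <;> simp [eigenRows, eigenCols] <;> ring

lemma smul_hyperbolicMonodromy {t : ℝ} (ht : t ≠ 0) (ℓ : ℝ) :
    (2 * t) • hyperbolicMonodromy t ℓ =
      eigenCols t * diagonal ![exp (t * ℓ), exp (-(t * ℓ))] * eigenRows t := by
  ext i j; fin_cases i <;> fin_cases j <;>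
    simp [hyperbolicMonodromy, eigenRows, eigenCols, cosh_eq, sinh_eq, Matrix.vecMul, dotProduct,
      Fin.sum_univ_two] <;>
    field_simp <;> ring

-- `2t • P B P⁻¹` with `P = eigenRows t`, as a matrix of polynomials in `t`
noncomputable def eigenConj (B : Matrix (Fin 2) (Fin 2) ℝ) : Matrix (Fin 2) (Fin 2) ℝ[X] :=
  !![C (B 0 1) * X ^ 2 + C (B 0 0 + B 1 1) * X + C (B 1 0),
     C (-B 0 1) * X ^ 2 + C (B 0 0 - B 1 1) * X + C (B 1 0);
     C (B 0 1) * X ^ 2 + C (B 0 0 - B 1 1) * X + C (-B 1 0),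
     C (-B 0 1) * X ^ 2 + C (B 0 0 + B 1 1) * X + C (-B 1 0)]

lemma eigenConj_map_eval (B : Matrix (Fin 2) (Fin 2) ℝ) (t : ℝ) :
    (eigenConj B).map (eval t) = eigenRows t * B * eigenCols t := by
  ext i j; fin_cases i <;> fin_cases j <;>
    simp [eigenConj, eigenRows, eigenCols, Matrix.mul_apply, Matrix.vecMul, dotProduct,
      Fin.sum_univ_two] <;> ring

lemma eigenConj_exp_identity {ℓ₁ ℓ₂ t : ℝ} {B₁ B₂ : Matrix (Fin 2) (Fin 2) ℝ} (ht : t ≠ 0)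
    (h : ⁅B₁ * hyperbolicMonodromy t ℓ₁, B₂ * hyperbolicMonodromy t ℓ₂⁆ = 0) :
    (eigenConj B₁ 1 0 * eigenConj B₂ 0 0 - eigenConj B₂ 1 0 * eigenConj B₁ 0 0).eval t
      + (eigenConj B₁ 1 1 * eigenConj B₂ 1 0).eval t * exp (-(2 * ℓ₁ * t))
      = (eigenConj B₂ 1 1 * eigenConj B₁ 1 0).eval t * exp (-(2 * ℓ₂ * t)) := by
  have hconj := lie_conj_mul_eq_zero (mul_ne_zero two_ne_zero ht) (eigenRows_mul_eigenCols t)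
    (smul_hyperbolicMonodromy ht ℓ₁) (smul_hyperbolicMonodromy ht ℓ₂) h
  have h10 := congrFun (congrFun hconj 1) 0
  rw [lie_mul_diagonal_apply_one_zero, ← eigenConj_map_eval, ← eigenConj_map_eval] at h10
  simp only [map_apply, Matrix.zero_apply] at h10
  simp only [eval_sub, eval_mul]
  have k₁ : exp (-(2 * ℓ₁ * t)) * exp (t * ℓ₁) = exp (-(t * ℓ₁)) := by rw [← exp_add]; ring_nf
  have k₂ : exp (-(2 * ℓ₂ * t)) * exp (t * ℓ₂) = exp (-(t * ℓ₂)) := by rw [← exp_add]; ring_nf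
  refine mul_right_cancel₀ (mul_ne_zero (exp_pos (t * ℓ₁)).ne' (exp_pos (t * ℓ₂)).ne') ?_
  linear_combination h10
    + (eigenConj B₁ 1 1).eval t * (eigenConj B₂ 1 0).eval t * exp (t * ℓ₂) * k₁
    - (eigenConj B₂ 1 1).eval t * (eigenConj B₁ 1 0).eval t * exp (t * ℓ₁) * k₂

lemma eigenConj_apply_one_one_ne_zero {B : Matrix (Fin 2) (Fin 2) ℝ} (hB : B.det = 1) :
    eigenConj B 1 1 ≠ 0 := by
  simp only [eigenConj, of_apply, cons_val', cons_val_one, cons_val_fin_one, ne_eq,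
    C_mul_X_sq_add_C_mul_X_add_C_eq_zero_iff]
  rintro ⟨hb, htr, hc⟩
  rw [det_fin_two, show B 1 1 = -B 0 0 by linarith, neg_eq_zero.mp hb] at hB
  nlinarith [sq_nonneg (B 0 0)]

lemma eq_one_or_eq_neg_one_of_eigenConj_apply_one_zero {B : Matrix (Fin 2) (Fin 2) ℝ}
    (hB : B.det = 1) (h : eigenConj B 1 0 = 0) : B = 1 ∨ B = -1 := by
  obtain ⟨a, b, c, d, rfl⟩ : ∃ a b c d, B = !![a, b; c, d] := ⟨_, _, _, _, eta_fin_two B⟩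
  simp only [eigenConj, of_apply, cons_val', cons_val_zero, cons_val_one, empty_val',
    cons_val_fin_one, C_mul_X_sq_add_C_mul_X_add_C_eq_zero_iff, neg_eq_zero, sub_eq_zero] at h
  obtain ⟨rfl, rfl, rfl⟩ := h
  rw [det_fin_two_of] at hB
  rcases mul_self_eq_one_iff.mp (by linarith : a * a = 1) with rfl | rfl
  · left; exact (one_fin_two).symm
  · right; rw [one_fin_two]; ext i j; fin_cases i <;> fin_cases j <;> simp

lemma eq_one_or_eq_neg_one_of_eigenConj {B₁ B₂ : Matrix (Fin 2) (Fin 2) ℝ} (hB₁ : B₁.det = 1)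
    (hB₂ : B₂.det = 1) (hU : eigenConj B₁ 1 1 * eigenConj B₂ 1 0 = 0)
    (hV : eigenConj B₂ 1 1 * eigenConj B₁ 1 0 = 0) :
    (B₁ = 1 ∨ B₁ = -1) ∧ (B₂ = 1 ∨ B₂ = -1) :=
  ⟨eq_one_or_eq_neg_one_of_eigenConj_apply_one_zero hB₁
      ((mul_eq_zero.mp hV).resolve_left (eigenConj_apply_one_one_ne_zero hB₂)),
    eq_one_or_eq_neg_one_of_eigenConj_apply_one_zero hB₂
      ((mul_eq_zero.mp hU).resolve_left (eigenConj_apply_one_one_ne_zero hB₁))⟩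

lemma eq_or_eq_neg_of_minors {a b c d p q r s : ℝ} (hB₁ : a * d - b * c = 1)
    (hB₂ : p * s - q * r = 1) (hab : a * q = b * p) (hac : a * r = c * p) (had : a * s = d * p)
    (hbc : b * r = c * q) (hbd : b * s = d * q) :
    !![a, b; c, d] = !![p, q; r, s] ∨ !![a, b; c, d] = -!![p, q; r, s] := by
  have hμ : !![a, b; c, d] = (a * s - b * r) • !![p, q; r, s] := by
    ext i j; fin_cases i <;> fin_cases j <;> simp
    · linear_combination (-a) * hB₂ - r * hab
    · linear_combination (-b) * hB₂ - s * hab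
    · linear_combination (-c) * hB₂ - s * hac + r * hbc
    · linear_combination (-d) * hB₂ - s * had + r * hbd
  have hdet := congrArg det hμ
  rw [det_smul, det_fin_two_of, det_fin_two_of, hB₁, hB₂] at hdet
  rcases mul_self_eq_one_iff.mp (by simpa [sq] using hdet.symm) with h | h
  · left; rw [hμ, h, one_smul]
  · right; rw [hμ, h, neg_one_smul]

lemma eq_or_eq_neg_of_eigenConj {B₁ B₂ : Matrix (Fin 2) (Fin 2) ℝ} (hB₁ : B₁.det = 1)
    (hB₂ : B₂.det = 1)
    (hD : eigenConj B₁ 1 0 * eigenConj B₂ 0 0 - eigenConj B₂ 1 0 * eigenConj B₁ 0 0 = 0)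
    (hUV : eigenConj B₁ 1 1 * eigenConj B₂ 1 0 = eigenConj B₂ 1 1 * eigenConj B₁ 1 0) :
    B₁ = B₂ ∨ B₁ = -B₂ := by
  obtain ⟨a, b, c, d, rfl⟩ : ∃ a b c d, B₁ = !![a, b; c, d] := ⟨_, _, _, _, eta_fin_two B₁⟩
  obtain ⟨p, q, r, s, rfl⟩ : ∃ p q r s, B₂ = !![p, q; r, s] := ⟨_, _, _, _, eta_fin_two B₂⟩
  rw [det_fin_two_of] at hB₁ hB₂
  have hD' : X * (C (2 * (b * s - d * q)) * X ^ 2 + C (2 * (a * s + b * r - c * q - d * p)) * X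
      + C (2 * (a * r - c * p))) = 0 := by
    rw [← hD]
    simp only [eigenConj, of_apply, cons_val', cons_val_zero, cons_val_one, empty_val',
      cons_val_fin_one, map_add, map_sub, map_mul, map_neg, map_ofNat]
    ring
  have hUV' : X * (C (2 * (a * q - b * p)) * X ^ 2 + C (2 * (b * r - c * q - a * s + d * p)) * X
      + C (2 * (c * s - d * r))) = 0 := by
    rw [← sub_eq_zero.mpr hUV]
    simp only [eigenConj, of_apply, cons_val', cons_val_zero, cons_val_one, empty_val',
      cons_val_fin_one, map_add, map_sub, map_mul, map_neg, map_ofNat]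
    ring
  rw [mul_eq_zero, or_iff_right X_ne_zero, C_mul_X_sq_add_C_mul_X_add_C_eq_zero_iff] at hD' hUV'
  obtain ⟨hbd, hsum, hac⟩ := hD'
  obtain ⟨hab, hdiff, hcd⟩ := hUV'
  exact eq_or_eq_neg_of_minors hB₁ hB₂ (by linarith) (by linarith) (by linarith) (by linarith)
    (by linarith)

theorem commutator_vanishing_characterization
    (ℓ₁ ℓ₂ : ℝ) (B₁ B₂ : Matrix (Fin 2) (Fin 2) ℝ)
    (hB₁ : B₁.det = 1) (hB₂ : B₂.det = 1) (h₁ : ℓ₁ > 0) (h₂ : ℓ₂ > 0)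
    (h : ∀ w : ℝ, w > 0 →
      transferM (w ^ 2) ℓ₁ B₁ * transferM (w ^ 2) ℓ₂ B₂
        - transferM (w ^ 2) ℓ₂ B₂ * transferM (w ^ 2) ℓ₁ B₁ = 0) :
    (ℓ₁ = ℓ₂ ∧ (B₁ = B₂ ∨ B₁ = -B₂)) ∨ ((B₁ = 1 ∨ B₁ = -1) ∧ (B₂ = 1 ∨ B₂ = -1)) := by
  have hK : ∀ t ≠ 0, ⁅B₁ * hyperbolicMonodromy t ℓ₁, B₂ * hyperbolicMonodromy t ℓ₂⁆ = 0 :=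
    fun t ht => lie_hyperbolicMonodromy_eq_zero (fun w hw => by
      simpa only [Ring.lie_def, transferM] using h w hw) ht
  have hE := fun t (ht : t > 0) => eigenConj_exp_identity ht.ne' (hK t ht.ne')
  have hD := eq_zero_of_eval_add_mul_exp_neg_eq (by positivity) (by positivity) hE
  simp only [hD, eval_zero, zero_add] at hE
  rcases lt_trichotomy ℓ₁ ℓ₂ with hlt | rfl | hgt
  · obtain ⟨hU, hV⟩ := eq_zero_of_eval_mul_exp_neg_eq (by linarith) hE
    exact Or.inr (eq_one_or_eq_neg_one_of_eigenConj hB₁ hB₂ hU hV)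
  · refine Or.inl ⟨rfl, eq_or_eq_neg_of_eigenConj hB₁ hB₂ hD
      (eq_of_forall_pos_eval_eq fun t ht => ?_)⟩
    exact mul_right_cancel₀ (exp_pos _).ne' (by simpa only [eval_mul] using hE t ht)
  · obtain ⟨hV, hU⟩ := eq_zero_of_eval_mul_exp_neg_eq (by linarith) fun t ht => (hE t ht).symm
    exact Or.inr (eq_one_or_eq_neg_one_of_eigenConj hB₁ hB₂ hU hV)
end

section
/- For ℓ₁, ℓ₂ > 0, the function w ↦ sin(ℓ₁w)·cos(ℓ₂w) does not tend to 0 as w → ∞. -/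
open Real Filter intervalIntegral

lemma cosIntegralBound (c T S : ℝ) (hc : c ≠ 0) :
    |∫ w in T..S, Real.cos (c*w)| ≤ 2/|c| := by
  rw [integral_comp_mul_left (fun x => Real.cos x) hc, integral_cos, smul_eq_mul, abs_mul, abs_inv]
  rw [div_eq_mul_inv, mul_comm]
  gcongr
  calc |Real.sin (c*S) - Real.sin (c*T)| ≤ |Real.sin (c*S)| + |Real.sin (c*T)| := abs_sub _ _
    _ ≤ 1 + 1 := by gcongr <;> exact Real.abs_sin_le_one _
    _ = 2 := by norm_num

lemma prodIdentity (x y : ℝ) :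
    (Real.sin x * Real.cos y)^2 =
      1/4 - Real.cos (2*x)/4 + Real.cos (2*y)/4
        - Real.cos ((2*x+2*y))/8 - Real.cos ((2*x-2*y))/8 := by
  have h1 := Real.sin_sq_add_cos_sq x
  have h2 := Real.sin_sq_add_cos_sq y
  rw [show 2*x+2*y = (x+y)+(x+y) by ring, show 2*x-2*y = (x-y)+(x-y) by ring,
    show (2:ℝ)*x = x+x by ring, show (2:ℝ)*y = y+y by ring]
  simp only [Real.cos_add, Real.sin_add, Real.cos_sub, Real.sin_sub]
  linear_combination (1/4)*(1 + Real.cos y^2 - Real.sin y^2) * h1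
    + (1/2) * Real.sin x^2 * h2

theorem sin_cos_not_tendsto_zero (ℓ₁ ℓ₂ : ℝ) (h₁ : ℓ₁ > 0) (h₂ : ℓ₂ > 0) :
    ¬ Tendsto (fun w : ℝ => Real.sin (ℓ₁ * w) * Real.cos (ℓ₂ * w)) atTop (nhds 0) := by
  intro h
  set a := ℓ₁
  set b := ℓ₂
  set C : ℝ := 1/(4*a) + 1/(4*b) + 1/(8*(a+b)) with hC
  have hCpos : 0 < C := by positivity
  set L : ℝ := 16*C + 16 with hLdef
  have hLpos : 0 < L := by positivity
  -- lower bound for the integral of the square over any window of length L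
  have lower : ∀ T : ℝ, L/8 - C ≤ ∫ w in T..T+L, (Real.sin (a*w) * Real.cos (b*w))^2 := by
    intro T
    have ha : (2*a) ≠ 0 := by positivity
    have hb : (2*b) ≠ 0 := by positivity
    have hab : (2*a+2*b) ≠ 0 := by positivity
    have i1 : IntervalIntegrable (fun w => Real.cos (2*a*w)) MeasureTheory.volume T (T+L) :=
      (Real.continuous_cos.comp (continuous_const.mul continuous_id)).intervalIntegrable _ _
    have i2 : IntervalIntegrable (fun w => Real.cos (2*b*w)) MeasureTheory.volume T (T+L) :=
      (Real.continuous_cos.comp (continuous_const.mul continuous_id)).intervalIntegrable _ _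
    have i3 : IntervalIntegrable (fun w => Real.cos ((2*a+2*b)*w)) MeasureTheory.volume T (T+L) :=
      (Real.continuous_cos.comp (continuous_const.mul continuous_id)).intervalIntegrable _ _
    have i4 : IntervalIntegrable (fun w => Real.cos ((2*a-2*b)*w)) MeasureTheory.volume T (T+L) :=
      (Real.continuous_cos.comp (continuous_const.mul continuous_id)).intervalIntegrable _ _
    have split : (∫ w in T..T+L, (Real.sin (a*w) * Real.cos (b*w))^2)
        = L/4 - (∫ w in T..T+L, Real.cos (2*a*w))/4 + (∫ w in T..T+L, Real.cos (2*b*w))/4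
          - (∫ w in T..T+L, Real.cos ((2*a+2*b)*w))/8
          - (∫ w in T..T+L, Real.cos ((2*a-2*b)*w))/8 := by
      have : (∫ w in T..T+L, (Real.sin (a*w) * Real.cos (b*w))^2)
          = ∫ w in T..T+L, (1/4 - Real.cos (2*a*w)/4 + Real.cos (2*b*w)/4
              - Real.cos ((2*a+2*b)*w)/8 - Real.cos ((2*a-2*b)*w)/8) := by
        apply intervalIntegral.integral_congr
        intro w _
        dsimp only
        rw [show 2*a*w = 2*(a*w) by ring, show 2*b*w = 2*(b*w) by ring,
          show (2*a+2*b)*w = 2*(a*w)+2*(b*w) by ring,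
          show (2*a-2*b)*w = 2*(a*w)-2*(b*w) by ring]
        exact prodIdentity _ _
      rw [this]
      rw [intervalIntegral.integral_sub (by
            apply IntervalIntegrable.sub
            apply IntervalIntegrable.add
            apply IntervalIntegrable.sub intervalIntegrable_const (i1.div_const 4)
            exact i2.div_const 4
            exact i3.div_const 8) (i4.div_const 8),
          intervalIntegral.integral_sub (by
            apply IntervalIntegrable.add
            apply IntervalIntegrable.sub intervalIntegrable_const (i1.div_const 4)
            exact i2.div_const 4) (i3.div_const 8),
          intervalIntegral.integral_add (intervalIntegrable_const.sub (i1.div_const 4))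
            (i2.div_const 4),
          intervalIntegral.integral_sub intervalIntegrable_const (i1.div_const 4),
          intervalIntegral.integral_const]
      simp only [intervalIntegral.integral_div]
      simp only [smul_eq_mul]
      ring
    rw [split]
    have b1 := cosIntegralBound (2*a) T (T+L) ha
    have b2 := cosIntegralBound (2*b) T (T+L) hb
    have b3 := cosIntegralBound (2*a+2*b) T (T+L) hab
    rw [show |2*a| = 2*a from abs_of_pos (by positivity)] at b1
    rw [show |2*b| = 2*b from abs_of_pos (by positivity)] at b2
    rw [show |2*a+2*b| = 2*a+2*b from abs_of_pos (by positivity)] at b3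
    -- pointwise bound for the last integral
    have b4 : |∫ w in T..T+L, Real.cos ((2*a-2*b)*w)| ≤ L := by
      have := intervalIntegral.norm_integral_le_of_norm_le_const
        (C := 1) (f := fun w => Real.cos ((2*a-2*b)*w)) (a := T) (b := T+L)
        (fun x _ => by simpa using Real.abs_cos_le_one _)
      simpa [abs_of_pos hLpos] using this
    have habs1 := abs_le.mp b1
    have habs2 := abs_le.mp b2
    have habs3 := abs_le.mp b3
    have habs4 := abs_le.mp b4
    rw [hC]
    have h2a : 2/(2*a) = 4 * (1/(4*a)) := by field_simp
    have h2b : 2/(2*b) = 4 * (1/(4*b)) := by field_simp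
    have hab' : a + b ≠ 0 := by positivity
    have h2ab : 2/(2*a+2*b) = 4 * (1/(8*(a+b))) * 2 := by
      field_simp; ring
    rw [h2a] at habs1
    rw [h2b] at habs2
    rw [h2ab] at habs3
    linarith [habs1.1, habs1.2, habs2.1, habs2.2, habs3.1, habs3.2, habs4.1, habs4.2]
  -- upper bound: eventually |f| ≤ 1/4
  obtain ⟨T₀, hT₀⟩ := (Metric.tendsto_atTop.mp h (1/4) (by norm_num))
  have upper : (∫ w in T₀..T₀+L, (Real.sin (a*w) * Real.cos (b*w))^2) ≤ L/16 := by
    have hle : T₀ ≤ T₀ + L := by linarith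
    calc (∫ w in T₀..T₀+L, (Real.sin (a*w) * Real.cos (b*w))^2)
        ≤ ∫ _ in T₀..T₀+L, (1/16 : ℝ) := by
          apply intervalIntegral.integral_mono_on hle
          · exact ((Real.continuous_sin.comp (continuous_const.mul continuous_id)).mul
              (Real.continuous_cos.comp (continuous_const.mul continuous_id))).pow 2
              |>.intervalIntegrable _ _
          · exact intervalIntegrable_const
          · intro x hx
            have hx' : x ≥ T₀ := hx.1
            have := hT₀ x hx'
            rw [Real.dist_eq, sub_zero] at this
            have h16 : |Real.sin (a*x) * Real.cos (b*x)|^2 ≤ (1/4)^2 := by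
              apply pow_le_pow_left₀ (abs_nonneg _) this.le
            calc (Real.sin (a*x) * Real.cos (b*x))^2
                = |Real.sin (a*x) * Real.cos (b*x)|^2 := (sq_abs _).symm
              _ ≤ (1/4)^2 := h16
              _ = 1/16 := by norm_num
      _ = L/16 := by rw [intervalIntegral.integral_const]; simp; ring
  have := lower T₀
  rw [hLdef] at this upper
  linarith
end
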